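/- Let G = ∏_{i∈I} G_i be a product of finite rank torsion-free abelian groups, each of rank at least 2, such that for every i there is g_i ∈ G_i with Hom(G_i, ⟨g_i⟩_*) = 0. If each ⟨(g_i)_{i∈I}⟩_* is reduced (hence slender), then Hom(G, ⟨(g_i)_{i∈I}⟩_*) = 0; in particular G is not a self-pure-generator. -/

import Mathlib

/-- The pure submodule of `A` generated by `a`:
`⟨a⟩_* = {x ∈ A : r • x ∈ R a for some nonzero r ∈ R}`. -/
def pureGen (R : Type*) {A : Type*} [CommRing R] [IsDomain R] [AddCommGroup A]
    [Module R A] (a : A) : Submodule R A where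
  carrier := {x | ∃ r : R, r ≠ 0 ∧ ∃ s : R, r • x = s • a}
  zero_mem' := ⟨1, one_ne_zero, 0, by simp⟩
  add_mem' := by
    rintro x y ⟨r, hr, s, hx⟩ ⟨r', hr', s', hy⟩
    refine ⟨r * r', mul_ne_zero hr hr', r' * s + r * s', ?_⟩
    rw [smul_add, add_smul, mul_smul, mul_smul, mul_smul, smul_comm r r' x, hx, hy,
      smul_comm r' s a, smul_comm r s' a, smul_smul, smul_smul, mul_comm s' r]
  smul_mem' := by
    rintro c x ⟨r, hr, s, hx⟩
    exact ⟨r, hr, c * s, by rw [smul_comm, hx, mul_smul]⟩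
universe u

/-- A submodule `K ≤ A` is pure iff `A ⧸ K` is torsion-free, i.e.
`r • x ∈ K` with `r ≠ 0` implies `x ∈ K`. -/
def IsPureSubmodule (R : Type*) {A : Type*} [CommRing R] [AddCommGroup A]
    [Module R A] (K : Submodule R A) : Prop :=
  ∀ (r : R) (x : A), r ≠ 0 → r • x ∈ K → x ∈ K

/-- `K` is `A`-generated: some direct sum of copies of `A` surjects onto `K`. -/
def ModGenerated (R : Type*) {A : Type u} [CommRing R] [AddCommGroup A]
    [Module R A] (K : Submodule R A) : Prop :=
  ∃ (ι : Type u) (f : (ι →₀ A) →ₗ[R] K), Function.Surjective f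

/-- `A` is a self-pure-generator: every pure submodule of `A` is `A`-generated. -/
def SelfPureGenerator (R : Type*) (A : Type u) [CommRing R] [AddCommGroup A]
    [Module R A] : Prop :=
  ∀ K : Submodule R A, IsPureSubmodule R K → ModGenerated R K

/-!
Let `S = ⟨g⟩_*`. It is countable, torsion-free and has no nonzero divisible elements, and this
is enough for a Specker-type argument: if `f : ∏ Gᵢ → S` were nonzero on every member of a
sequence `wⱼ` tending to `0` coordinatewise, one could choose nonzero integers `Mⱼ`, each
dividing the next, so that the `2^ℵ₀` sums `f (∑_{j ∈ T} Mⱼ • wⱼ)` are pairwise distinct.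

Consequently the sets of indices on whose support `f` vanishes form a σ-ideal, and if `f ≠ 0`
there is a non-null set `K` on which its complement behaves like a countably complete
ultrafilter. As every `Gᵢ` is countable, almost all `i ∈ K` then share, under fixed
enumerations, the addition table of a single `G_{i₀}`; this gives a homomorphism
`G_{i₀} → ∏ Gᵢ` whose composite with `f` is nonzero. That is impossible, because the
`i₀`-coordinate of a homomorphism `G_{i₀} → ⟨g⟩_*` lands in `⟨g_{i₀}⟩_*`.
Finally, `⟨g⟩_*` is a nonzero pure subgroup, so it is not an image of copies of `∏ Gᵢ`.
-/

section PureGen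

variable {R A B : Type*} [CommRing R] [IsDomain R] [AddCommGroup A] [Module R A]
  [AddCommGroup B] [Module R B]

lemma self_mem_pureGen (a : A) : a ∈ pureGen R a := ⟨1, one_ne_zero, 1, rfl⟩

lemma isPureSubmodule_pureGen (a : A) : IsPureSubmodule R (pureGen R a) := by
  rintro r x hr ⟨r', hr', s, hs⟩
  exact ⟨r' * r, mul_ne_zero hr' hr, s, by rw [mul_smul, hs]⟩

lemma map_mem_pureGen (p : A →ₗ[R] B) {a x : A} (hx : x ∈ pureGen R a) :
    p x ∈ pureGen R (p a) := by
  obtain ⟨r, hr, s, hs⟩ := hx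
  exact ⟨r, hr, s, by rw [← map_smul, hs, map_smul]⟩

lemma eq_zero_of_mem_pureGen_of_map_eq_zero [Module.IsTorsionFree R A] [Module.IsTorsionFree R B]
    (p : A →ₗ[R] B) {a x : A} (hx : x ∈ pureGen R a) (hpx : p x = 0) (hpa : p a ≠ 0) :
    x = 0 := by
  obtain ⟨r, hr, s, hs⟩ := hx
  have hs0 : s = 0 := by
    have h := congrArg p hs
    rw [map_smul, map_smul, hpx, smul_zero] at h
    exact (smul_eq_zero.mp h.symm).resolve_right hpa
  rw [hs0, zero_smul] at hs
  exact (smul_eq_zero.mp hs).resolve_left hr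

lemma not_selfPureGenerator_of_forall_eq_zero {a : A} (ha : a ≠ 0)
    (h : ∀ f : A →ₗ[R] pureGen R a, f = 0) : ¬ SelfPureGenerator R A := by
  intro hA
  obtain ⟨ι, F, hF⟩ := hA _ (isPureSubmodule_pureGen a)
  have hF0 : F = 0 :=
    Finsupp.lhom_ext fun i y => LinearMap.congr_fun (h (F ∘ₗ Finsupp.lsingle i)) y
  obtain ⟨w, hw⟩ := hF ⟨a, self_mem_pureGen a⟩
  rw [hF0] at hw
  exact ha (congrArg Subtype.val hw).symm

lemma hom_into_pureGen_pi_eq_zero {I : Type*} {G : I → Type*} [∀ i, AddCommGroup (G i)]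
    [∀ i, Module R (G i)] [∀ i, Module.IsTorsionFree R (G i)] {g : ∀ i, G i} {i : I}
    (hgi : g i ≠ 0) (h : ∀ ψ : G i →ₗ[R] pureGen R (g i), ψ = 0)
    (φ : G i →ₗ[R] pureGen R g) : φ = 0 := by
  let ψ : G i →ₗ[R] pureGen R (g i) :=
    (LinearMap.proj i ∘ₗ (pureGen R g).subtype ∘ₗ φ).codRestrict _
      fun y => map_mem_pureGen (LinearMap.proj i) (φ y).2
  refine LinearMap.ext fun y => Subtype.ext ?_
  have hy : (φ y : ∀ j, G j) i = 0 := congrArg Subtype.val (LinearMap.congr_fun (h ψ) y)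
  exact eq_zero_of_mem_pureGen_of_map_eq_zero (LinearMap.proj i) (φ y).2 hy hgi

end PureGen

section Countability

variable {M : Type*} [AddCommGroup M] [Module.IsTorsionFree ℤ M]

lemma countable_of_forall_exists_zsmul_mem {s : Set M} (N : Submodule ℤ M) [Countable N]
    (h : ∀ x ∈ s, ∃ a : ℤ, a ≠ 0 ∧ a • x ∈ N) : s.Countable := by
  choose a ha haN using h
  have hinj : Function.Injective fun x : s => (a x x.2, (⟨_, haN x x.2⟩ : N)) := by
    rintro ⟨x, hx⟩ ⟨y, hy⟩ hxy
    simp only [Prod.mk.injEq, Subtype.mk.injEq] at hxy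
    obtain ⟨h1, h2⟩ := hxy
    rw [h1] at h2
    exact Subtype.ext (smul_right_injective M (ha y hy) h2)
  exact Set.countable_coe_iff.mp hinj.countable

lemma countable_of_rank_lt_aleph0 (h : Module.rank ℤ M < Cardinal.aleph0) : Countable M := by
  obtain ⟨s, hs, hmax⟩ := exists_maximal_linearIndepOn ℤ (id : M → M)
  have : Countable s :=
    Cardinal.mk_le_aleph0_iff.mp (hs.linearIndependent.cardinal_le_rank.trans h.le)
  have hN : Countable (Submodule.span ℤ (Set.range ((↑) : s → M))) := inferInstance
  rw [Subtype.range_coe] at hN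
  refine Set.countable_univ_iff.mp
    (countable_of_forall_exists_zsmul_mem (Submodule.span ℤ s) fun x _ => ?_)
  by_cases hx : x ∈ s
  · exact ⟨1, one_ne_zero, by simpa using Submodule.subset_span hx⟩
  · simpa using hmax x hx

instance (a : M) : Countable (pureGen ℤ a) := by
  refine Set.countable_coe_iff.mpr
    (countable_of_forall_exists_zsmul_mem (Submodule.span ℤ (Set.range fun _ : Unit => a)) ?_)
  rintro x ⟨r, hr, s, hs⟩
  exact ⟨r, hr, hs ▸ Submodule.smul_mem _ s (Submodule.subset_span ⟨(), rfl⟩)⟩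

end Countability

lemma exists_eq_smul_single_add_smul {c : ℕ → ℤ} {j₀ : ℕ} {b : ℤ} (hlt : ∀ j < j₀, c j = 0)
    (hdvd : ∀ j, j₀ < j → b ∣ c j) : ∃ d : ℕ → ℤ, c = c j₀ • Pi.single j₀ 1 + b • d := by
  refine ⟨fun j => if j₀ < j then c j / b else 0, funext fun j => ?_⟩
  rcases lt_trichotomy j j₀ with hj | rfl | hj
  · simp [hlt j hj, hj.ne, hj.not_gt]
  · simp
  · simp [hj, hj.ne', Int.mul_ediv_cancel' (hdvd j hj)]

lemma injective_of_forall_first_difference {α : Type*} {Φ : Set ℕ → α}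
    (h : ∀ T T' j₀, (∀ j < j₀, j ∈ T ↔ j ∈ T') → j₀ ∈ T → j₀ ∉ T' → Φ T ≠ Φ T') :
    Function.Injective Φ := by
  classical
  intro T T' hΦ
  by_contra hne
  have hex : ∃ j, ¬(j ∈ T ↔ j ∈ T') := by
    by_contra! hall
    exact hne (Set.ext hall)
  have hlt : ∀ j < Nat.find hex, j ∈ T ↔ j ∈ T' := fun j hj => not_not.mp (Nat.find_min hex hj)
  by_cases hT : Nat.find hex ∈ T
  · exact h T T' _ hlt hT (fun hT' => Nat.find_spec hex (iff_of_true hT hT')) hΦ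
  · refine h T' T _ (fun j hj => (hlt j hj).symm) ?_ hT hΦ.symm
    by_contra hT'
    exact Nat.find_spec hex (iff_of_false hT hT')

/-- For torsion-free groups this says that the group is reduced. -/
def NoNonzeroDivisible (S : Type*) [AddCommGroup S] : Prop :=
  ∀ x : S, (∀ n : ℤ, n ≠ 0 → ∃ y : S, n • y = x) → x = 0

section Slender

open Function

variable {I : Type*} {G : I → Type*} [∀ i, AddCommGroup (G i)] {S : Type*} [AddCommGroup S]

/-- The coordinatewise sum `∑ⱼ c j • w j`; its `i`-th coordinate is a finite sum when
`w j i = 0` for all `j ≥ N i`. -/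
def coordSeries (N : I → ℕ) (w : ℕ → ∀ i, G i) : (ℕ → ℤ) →ₗ[ℤ] ∀ i, G i :=
  LinearMap.pi fun i => ∑ j ∈ Finset.range (N i), (LinearMap.proj j).smulRight (w j i)

lemma coordSeries_single {N : I → ℕ} {w : ℕ → ∀ i, G i} (hN : ∀ i j, N i ≤ j → w j i = 0)
    (j : ℕ) : coordSeries N w (Pi.single j 1) = w j := by
  funext i
  simp only [coordSeries, LinearMap.pi_apply, LinearMap.sum_apply,
    LinearMap.smulRight_apply, LinearMap.proj_apply]
  rw [Finset.sum_eq_single j]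
  · simp
  · intro k _ hk
    simp [hk]
  · intro hj
    rw [hN i j (by simpa using hj)]
    simp

def IsNull (f : (∀ i, G i) →ₗ[ℤ] S) (J : Set I) : Prop :=
  ∀ x : ∀ i, G i, (∀ i ∉ J, x i = 0) → f x = 0

lemma not_isNull_iff {f : (∀ i, G i) →ₗ[ℤ] S} {J : Set I} :
    ¬ IsNull f J ↔ ∃ x : ∀ i, G i, (∀ i ∉ J, x i = 0) ∧ f x ≠ 0 := by
  simp only [IsNull, not_forall, exists_prop]

lemma isNull_empty (f : (∀ i, G i) →ₗ[ℤ] S) : IsNull f ∅ := fun x hx => by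
  rw [show x = 0 from funext fun i => hx i (Set.notMem_empty i), map_zero]

namespace IsNull

variable {f : (∀ i, G i) →ₗ[ℤ] S} {J L : Set I}

lemma map_eq (hJ : IsNull f J) {x y : ∀ i, G i} (h : ∀ i ∉ J, x i = y i) : f x = f y := by
  rw [← sub_eq_zero, ← map_sub]
  exact hJ _ fun i hi => sub_eq_zero.mpr (h i hi)

lemma mono (hL : IsNull f L) (h : J ⊆ L) : IsNull f J :=
  fun x hx => hL x fun i hi => hx i fun hiJ => hi (h hiJ)

lemma union (hJ : IsNull f J) (hL : IsNull f L) : IsNull f (J ∪ L) := by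
  classical
  intro x hx
  rw [hL.map_eq (y := J.piecewise x 0) fun i hi => ?_]
  · exact hJ _ fun i hi => Set.piecewise_eq_of_notMem _ _ _ hi
  · by_cases hiJ : i ∈ J
    · exact (Set.piecewise_eq_of_mem _ _ _ hiJ).symm
    · rw [Set.piecewise_eq_of_notMem _ _ _ hiJ, hx i (by simp [hiJ, hi]), Pi.zero_apply]

end IsNull

lemma isNull_biUnion_finset {ι : Type*} (f : (∀ i, G i) →ₗ[ℤ] S) (s : Finset ι)
    {K : ι → Set I} (h : ∀ n ∈ s, IsNull f (K n)) : IsNull f (⋃ n ∈ s, K n) := by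
  classical
  induction s using Finset.induction_on with
  | empty => simpa using isNull_empty f
  | insert a s _ ih =>
    rw [Finset.set_biUnion_insert]
    exact (h a (Finset.mem_insert_self a s)).union
      (ih fun n hn => h n (Finset.mem_insert_of_mem hn))

variable [Module.IsTorsionFree ℤ S] [Countable S]

theorem exists_map_eq_zero_of_eventually_eq_zero (hS : NoNonzeroDivisible S)
    (f : (∀ i, G i) →ₗ[ℤ] S) {w : ℕ → ∀ i, G i} (hw : ∀ i, ∃ N, ∀ j, N ≤ j → w j i = 0) :
    ∃ j, f (w j) = 0 := by
  classical
  by_contra! hfw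
  choose N hN using hw
  have hindiv : ∀ j, ∃ m : ℤ, m ≠ 0 ∧ ∀ y, m • y ≠ f (w j) := fun j => by
    by_contra! h
    exact hfw j (hS _ h)
  choose m hm0 hm using hindiv
  set M : ℕ → ℤ := fun j => ∏ l ∈ Finset.range j, m l
  set Φ : Set ℕ → S := fun T => f (coordSeries N w (T.indicator M))
  have hsep : ∀ T T' j₀, (∀ j < j₀, j ∈ T ↔ j ∈ T') → j₀ ∈ T → j₀ ∉ T' → Φ T ≠ Φ T' := by
    intro T T' j₀ hlt hT hT' hΦ
    -- The two sums first differ in the term `M j₀ • w j₀`; all later terms are multiples of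
    -- `M (j₀ + 1) = M j₀ * m j₀`, so `f (w j₀)` would be divisible by `m j₀`.
    obtain ⟨d, hd⟩ := exists_eq_smul_single_add_smul (c := T.indicator M - T'.indicator M)
      (b := M (j₀ + 1)) (fun j hj => by simp [Set.indicator_apply, hlt j hj])
      fun j hj => by
        have : M (j₀ + 1) ∣ M j :=
          Finset.prod_dvd_prod_of_subset _ _ _ (Finset.range_subset_range.mpr hj)
        simp only [Pi.sub_apply, Set.indicator_apply]
        split_ifs <;> simp [this]
    have hMsucc : M (j₀ + 1) = M j₀ * m j₀ := Finset.prod_range_succ m j₀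
    have hM0 : M j₀ ≠ 0 := Finset.prod_ne_zero_iff.mpr fun l _ => hm0 l
    have h0 : M j₀ • (f (w j₀) + m j₀ • f (coordSeries N w d)) = 0 := by
      have h := congrArg (fun c => f (coordSeries N w c)) hd
      simp only [map_sub, map_add, map_smul, coordSeries_single hN] at h
      rw [Pi.sub_apply, Set.indicator_of_mem hT, Set.indicator_of_notMem hT', sub_zero,
        hMsucc, mul_smul] at h
      rw [smul_add, ← h]
      exact sub_eq_zero.mpr hΦ
    refine hm j₀ (-f (coordSeries N w d)) ?_
    rw [smul_neg, neg_eq_iff_add_eq_zero, add_comm]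
    exact (smul_eq_zero.mp h0).resolve_left hM0
  have hinj : Function.Injective Φ := injective_of_forall_first_difference hsep
  obtain ⟨e, he⟩ := Countable.exists_injective_nat S
  exact Function.cantor_injective _ (he.comp hinj)

theorem exists_map_eq_zero_of_pairwise_disjoint (hS : NoNonzeroDivisible S)
    (f : (∀ i, G i) →ₗ[ℤ] S) {L : ℕ → Set I} (hL : Pairwise (Disjoint on L))
    {x : ℕ → ∀ i, G i} (hx : ∀ n, ∀ i ∉ L n, x n i = 0) : ∃ n, f (x n) = 0 := by
  refine exists_map_eq_zero_of_eventually_eq_zero hS f fun i => ?_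
  by_cases h : ∃ n, i ∈ L n
  · obtain ⟨n, hn⟩ := h
    exact ⟨n + 1, fun j hj => hx j i fun hj' =>
      Set.disjoint_left.mp (hL (by omega : n ≠ j)) hn hj'⟩
  · push Not at h
    exact ⟨0, fun j _ => hx j i (h j)⟩

lemma isNull_iUnion_nat (hS : NoNonzeroDivisible S) (f : (∀ i, G i) →ₗ[ℤ] S)
    {K : ℕ → Set I} (h : ∀ n, IsNull f (K n)) : IsNull f (⋃ n, K n) := by
  classical
  intro x hx
  set T : ℕ → Set I := fun j => ⋃ l ∈ Finset.range j, K l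
  have hT : ∀ j, IsNull f (T j) := fun j => isNull_biUnion_finset f _ fun l _ => h l
  have hw : ∀ i, ∃ N, ∀ j, N ≤ j → (x - (T j).piecewise x 0) i = 0 := by
    intro i
    by_cases hxi : x i = 0
    · refine ⟨0, fun j _ => ?_⟩
      by_cases hi : i ∈ T j <;> simp [hi, hxi]
    · obtain ⟨n, hn⟩ := Set.mem_iUnion.mp (by_contra fun hi => hxi (hx i hi))
      refine ⟨n + 1, fun j hj => ?_⟩
      have : i ∈ T j := Set.mem_biUnion (Finset.mem_range.mpr (by omega)) hn
      simp [Set.piecewise_eq_of_mem _ _ _ this]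
  obtain ⟨j, hj⟩ := exists_map_eq_zero_of_eventually_eq_zero hS f hw
  rw [map_sub, sub_eq_zero] at hj
  rw [hj]
  exact hT j _ fun i hi => Set.piecewise_eq_of_notMem _ _ _ hi

lemma isNull_iUnion (hS : NoNonzeroDivisible S) (f : (∀ i, G i) →ₗ[ℤ] S) {ι : Type*}
    [Countable ι] {K : ι → Set I} (h : ∀ n, IsNull f (K n)) : IsNull f (⋃ n, K n) := by
  cases isEmpty_or_nonempty ι
  · simpa using isNull_empty f
  · obtain ⟨e, he⟩ := exists_surjective_nat ι
    rw [← he.iUnion_comp]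
    exact isNull_iUnion_nat hS f fun n => h (e n)

lemma exists_atom (hS : NoNonzeroDivisible S) (f : (∀ i, G i) →ₗ[ℤ] S)
    (huniv : ¬ IsNull f Set.univ) :
    ∃ K, ¬ IsNull f K ∧ ∀ L ⊆ K, IsNull f L ∨ IsNull f (K \ L) := by
  by_contra! hsplit
  choose L hLK hL hKL using hsplit
  let K : ℕ → {K : Set I // ¬ IsNull f K} := fun n =>
    Nat.rec ⟨Set.univ, huniv⟩ (fun _ K => ⟨K.1 \ L K.1 K.2, hKL K.1 K.2⟩) n
  have hanti : Antitone fun n => (K n).1 := antitone_nat_of_succ_le fun n => Set.sdiff_subset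
  have hdisj : Pairwise (Disjoint on fun n => L (K n).1 (K n).2) :=
    (pairwise_disjoint_on _).mpr fun n m hnm =>
      Set.disjoint_left.mpr fun i hin him => ((hanti hnm) (hLK _ _ him)).2 hin
  choose x hxL hfx using fun n => not_isNull_iff.mp (hL (K n).1 (K n).2)
  obtain ⟨n, hn⟩ := exists_map_eq_zero_of_pairwise_disjoint hS f hdisj hxL
  exact hfx n hn

variable {f : (∀ i, G i) →ₗ[ℤ] S} {K : Set I}

lemma exists_isNull_sdiff_preimage (hS : NoNonzeroDivisible S) (hK : ¬ IsNull f K)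
    (hatom : ∀ L ⊆ K, IsNull f L ∨ IsNull f (K \ L)) (c : I → ℕ) :
    ∃ v, IsNull f (K \ c ⁻¹' {v}) := by
  by_contra! h
  have hv : ∀ v, IsNull f (K ∩ c ⁻¹' {v}) := fun v =>
    (hatom _ Set.inter_subset_left).resolve_right (by rw [Set.sdiff_self_inter]; exact h v)
  exact hK ((isNull_iUnion hS f hv).mono fun i hi => Set.mem_iUnion.mpr ⟨c i, hi, rfl⟩)

lemma exists_subset_isNull_sdiff_forall_eq (hS : NoNonzeroDivisible S) (hK : ¬ IsNull f K)
    (hatom : ∀ L ⊆ K, IsNull f L ∨ IsNull f (K \ L)) {ι : Type*} [Countable ι]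
    (c : ι → I → ℕ) :
    ∃ B ⊆ K, IsNull f (K \ B) ∧ ∀ p, ∀ i ∈ B, ∀ i' ∈ B, c p i = c p i' := by
  choose v hv using fun p => exists_isNull_sdiff_preimage hS hK hatom (c p)
  refine ⟨K ∩ ⋂ p, c p ⁻¹' {v p}, Set.inter_subset_left, ?_, fun p i hi i' hi' => ?_⟩
  · rw [Set.sdiff_self_inter, Set.sdiff_iInter]
    exact isNull_iUnion hS f hv
  · exact (Set.mem_iInter.mp hi.2 p).trans (Set.mem_iInter.mp hi'.2 p).symm

theorem exists_comp_ne_zero_of_ne_zero [∀ i, Countable (G i)] (hS : NoNonzeroDivisible S)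
    (hf : f ≠ 0) : ∃ (i₀ : I) (φ : G i₀ →ₗ[ℤ] ∀ i, G i), f ∘ₗ φ ≠ 0 := by
  classical
  obtain ⟨K, hK, hatom⟩ := exists_atom hS f fun h =>
    hf (LinearMap.ext fun x => h x fun i hi => absurd (Set.mem_univ i) hi)
  choose en hen using fun i => exists_surjective_nat (G i)
  set idx : ∀ i, G i → ℕ := fun i => Function.surjInv (hen i)
  have hidx : ∀ i y, en i (idx i y) = y := fun i => Function.surjInv_eq (hen i)
  -- On `B` all the addition tables `(a, b) ↦ idx i (en i a + en i b)` of the `Gᵢ` coincide.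
  obtain ⟨B, hBK, hKB, hB⟩ := exists_subset_isNull_sdiff_forall_eq hS hK hatom
    fun (p : ℕ × ℕ) i => idx i (en i p.1 + en i p.2)
  have hBnull : ¬ IsNull f B := fun h =>
    hK ((h.union hKB).mono fun i hi => (em (i ∈ B)).imp id fun h => ⟨hi, h⟩)
  obtain ⟨x, hxB, hfx⟩ := not_isNull_iff.mp hBnull
  obtain ⟨v, hv⟩ := exists_isNull_sdiff_preimage hS hK hatom fun i => idx i (x i)
  obtain ⟨i₀, hi₀B, hi₀v⟩ : (B ∩ (fun i => idx i (x i)) ⁻¹' {v}).Nonempty := by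
    by_contra! h
    exact hBnull (hv.mono fun i hiB => ⟨hBK hiB, fun hiv => h.subset ⟨hiB, hiv⟩⟩)
  let φ : G i₀ →+ ∀ i, G i :=
    AddMonoidHom.mk' (fun y => B.piecewise (fun i => en i (idx i₀ y)) 0) fun y y' => by
      funext i
      by_cases hi : i ∈ B
      · have hsum : idx i₀ (y + y') = idx i₀ (en i₀ (idx i₀ y) + en i₀ (idx i₀ y')) := by
          rw [hidx, hidx]
        simp only [Set.piecewise_eq_of_mem _ _ _ hi, Pi.add_apply]
        rw [hsum, hB (idx i₀ y, idx i₀ y') i₀ hi₀B i hi, hidx]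
      · simp [Set.piecewise_eq_of_notMem _ _ _ hi]
  refine ⟨i₀, φ.toIntLinearMap, fun h => hfx ?_⟩
  rw [hv.map_eq (y := φ (x i₀)) fun i hi => ?_]
  · exact LinearMap.congr_fun h (x i₀)
  · by_cases hiB : i ∈ B
    · have hiv : idx i (x i) = v := by_contra fun hne => hi ⟨hBK hiB, hne⟩
      have hi₀v' : idx i₀ (x i₀) = v := hi₀v
      simp [φ, Set.piecewise_eq_of_mem _ _ _ hiB, hi₀v', ← hiv, hidx]
    · simp [φ, Set.piecewise_eq_of_notMem _ _ _ hiB, hxB i hiB]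

end Slender

theorem stmt17_general (I : Type u) [Nonempty I] (G : I → Type u)
    [∀ i, AddCommGroup (G i)] [∀ i, NoZeroSMulDivisors ℤ (G i)]
    (hfin : ∀ i, Module.rank ℤ (G i) < Cardinal.aleph0)
    (g : ∀ i, G i) (hg0 : ∀ i, g i ≠ 0)
    (hhom0 : ∀ i, ∀ f : G i →ₗ[ℤ] (pureGen ℤ (g i)), f = 0)
    (hred : ∀ x : pureGen ℤ g,
      (∀ n : ℤ, n ≠ 0 → ∃ y : pureGen ℤ g, n • y = x) → x = 0) :
    (∀ f : (∀ i, G i) →ₗ[ℤ] (pureGen ℤ g), f = 0) ∧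
      ¬ SelfPureGenerator ℤ (∀ i, G i) := by
  have : ∀ i, Countable (G i) := fun i => countable_of_rank_lt_aleph0 (hfin i)
  have hzero : ∀ f : (∀ i, G i) →ₗ[ℤ] pureGen ℤ g, f = 0 := fun f => by
    by_contra hf
    obtain ⟨i₀, φ, hφ⟩ := exists_comp_ne_zero_of_ne_zero hred hf
    exact hφ (hom_into_pureGen_pi_eq_zero (hg0 i₀) (hhom0 i₀) _)
  obtain ⟨i⟩ := ‹Nonempty I›
  exact ⟨hzero, not_selfPureGenerator_of_forall_eq_zero (fun h => hg0 i (congrFun h i)) hzero⟩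

/-- Let `G = ∏_{i ∈ I} G i` be a product of finite rank
torsion-free abelian groups, each of rank at least `2`, and `g i ∈ G i` nonzero
with `Hom(G i, ⟨g i⟩_*) = 0` for each `i`.  If `⟨(g i)_i⟩_*` is reduced, then
`Hom(G, ⟨(g i)_i⟩_*) = 0`; in particular `G` is not a self-pure-generator. -/
theorem stmt17 (I : Type u) [Nonempty I] (G : I → Type u)
    [∀ i, AddCommGroup (G i)] [∀ i, NoZeroSMulDivisors ℤ (G i)]
    (hfin : ∀ i, Module.rank ℤ (G i) < Cardinal.aleph0)
    (hrk2 : ∀ i, 2 ≤ Module.rank ℤ (G i))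
    (g : ∀ i, G i) (hg0 : ∀ i, g i ≠ 0)
    (hhom0 : ∀ i, ∀ f : G i →ₗ[ℤ] (pureGen ℤ (g i)), f = 0)
    (hred : ∀ x : pureGen ℤ g,
      (∀ n : ℤ, n ≠ 0 → ∃ y : pureGen ℤ g, n • y = x) → x = 0) :
    (∀ f : (∀ i, G i) →ₗ[ℤ] (pureGen ℤ g), f = 0) ∧
      ¬ SelfPureGenerator ℤ (∀ i, G i) :=
  stmt17_general I G hfin g hg0 hhom0 hred
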